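/- arXiv:1701.07818 — 2 statements merged into one kernel-verified Lean document; each statement's English description precedes it below -/
import Mathlib

section
/- For odd r = 2m+1 ≥ 3 and an integer 1 ≤ i ≤ m, define J_i(r) = 1 + Σ_{j=1}^{i−1} ∏_{k=1}^{j} ( −4 sin(2π(i−k)/r)·sin(2π(i+k)/r) ) (Habiro's formula for the i-th colored Jones polynomial of the figure-eight knot at t = e^{4πi/r}). Then for every ε > 0 there exists R such that for every odd r = 2m+1 ≥ R and every integer i with 1 ≤ i ≤ m, one has |J_i(r)| ≤ exp( r·( 3Λ(π/3)/(2π) + ε ) ). -/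
/-!
Write `F t = log |2 sin t|`, so that `Λ' = -F`. The `j`-th summand of `J_i(r)` has modulus at most
`exp (∑ F (2πn/r))`, the sum running over the grid points `i - j ≤ n ≤ i + j`, `n ≠ i`.
`F` is `π`-periodic and monotone on each quarter period, so at every grid point away from the
peaks `π/2`, `3π/2` it is dominated by its average over an adjacent cell of length `2π/r`, and
distinct points get distinct cells. Up to four exceptional points (each contributing at most
`log 2`) and five unused cells (each of integral `o(1)`, by uniform continuity of `Λ`), the sum
is therefore at most `r/(2π)` times `Λ(2π(i-j-1)/r) - Λ(2π(i+j+1)/r) ≤ 2 Λ(π/6) = 3 Λ(π/3)`,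
the last two facts coming from the shape of `Λ` on `[0, π]` and from its duplication formula.
As there are fewer than `r` summands, the polynomial factor is absorbed into `exp (r ε / 2)`.
-/

open Real

/-- The Lobachevsky function `Λ(x) = -∫₀ˣ log|2 sin t| dt`. -/
noncomputable def lob (x : ℝ) : ℝ := -∫ t in (0:ℝ)..x, Real.log |2 * Real.sin t|

/-- Habiro's formula for the value at `t = e^{4πi/r}` of the `i`-th colored
Jones polynomial of the figure-eight knot. -/
noncomputable def fig8J (r i : ℕ) : ℝ :=
  1 + ∑ j ∈ Finset.Icc 1 (i-1), ∏ k ∈ Finset.Icc 1 j,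
    (-4 * Real.sin (2*π*((i:ℝ)-(k:ℝ))/r) * Real.sin (2*π*((i:ℝ)+(k:ℝ))/r))

open MeasureTheory intervalIntegral Set

noncomputable def logTwoSin (t : ℝ) : ℝ := log |2 * sin t|

lemma logTwoSin_le_log_two (t : ℝ) : logTwoSin t ≤ log 2 := by
  rcases eq_or_ne (sin t) 0 with h | h
  · simpa [logTwoSin, h] using log_nonneg one_le_two
  · refine log_le_log (by positivity) ?_
    rw [abs_mul, abs_two]
    nlinarith [abs_sin_le_one t]

lemma abs_two_mul_sin_le_exp_logTwoSin (t : ℝ) : |2 * sin t| ≤ exp (logTwoSin t) :=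
  le_exp_log _

lemma logTwoSin_periodic : Function.Periodic logTwoSin π := by
  intro t
  simp [logTwoSin, sin_add_pi]

lemma logTwoSin_pi_sub (t : ℝ) : logTwoSin (π - t) = logTwoSin t := by
  simp [logTwoSin, sin_pi_sub]

lemma intervalIntegrable_logTwoSin (a b : ℝ) : IntervalIntegrable logTwoSin volume a b := by
  have : AnalyticOnNhd ℝ (fun t ↦ 2 * sin t) univ :=
    analyticOnNhd_const.mul analyticOnNhd_sin
  exact (this.meromorphicOn.mono_set (subset_univ _)).intervalIntegrable_log_norm

lemma integral_logTwoSin (a b : ℝ) : ∫ t in a..b, logTwoSin t = lob a - lob b := by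
  rw [lob, lob, ← integral_interval_sub_left (intervalIntegrable_logTwoSin 0 b)
    (intervalIntegrable_logTwoSin 0 a)]
  simp only [logTwoSin]
  ring

lemma continuous_lob : Continuous lob :=
  (continuous_primitive intervalIntegrable_logTwoSin 0).neg

lemma lob_zero : lob 0 = 0 := by simp [lob]

/-- From `2 sin 2t = (2 sin t) (2 cos t)`. -/
lemma lob_two_mul (x : ℝ) : lob (2 * x) = 2 * lob x + 2 * lob (x + π / 2) - 2 * lob (π / 2) := by
  have hsin : sin ⁻¹' {0}ᶜ ∈ Filter.codiscrete ℝ :=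
    analyticOnNhd_sin.preimage_zero_mem_codiscrete (x := π / 2) (by simp)
  have hcos : cos ⁻¹' {0}ᶜ ∈ Filter.codiscrete ℝ :=
    analyticOnNhd_cos.preimage_zero_mem_codiscrete (x := 0) (by simp)
  have hsplit : ∫ t in (0:ℝ)..x, logTwoSin (2 * t)
      = ∫ t in (0:ℝ)..x, (logTwoSin t + logTwoSin (t + π / 2)) := by
    refine integral_congr_codiscreteWithin (Filter.codiscreteWithin_mono (subset_univ _) ?_)
    filter_upwards [hsin, hcos] with t hs hc
    simp only [mem_preimage, mem_compl_iff, mem_singleton_iff] at hs hc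
    rw [logTwoSin, logTwoSin, logTwoSin, sin_add_pi_div_two, sin_two_mul,
      show 2 * (2 * sin t * cos t) = (2 * sin t) * (2 * cos t) by ring, abs_mul,
      log_mul (by positivity) (by positivity)]
  have hshift : ∫ t in (0:ℝ)..x, logTwoSin (t + π / 2) = lob (π / 2) - lob (x + π / 2) := by
    rw [integral_comp_add_right logTwoSin, zero_add, integral_logTwoSin]
  have hscale : ∫ t in (0:ℝ)..x, logTwoSin (2 * t) = (lob 0 - lob (2 * x)) / 2 := by
    rw [integral_comp_mul_left logTwoSin two_ne_zero, mul_zero, integral_logTwoSin, smul_eq_mul]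
    ring
  have hint : IntervalIntegrable (fun t ↦ logTwoSin (t + π / 2)) volume 0 x := by
    simpa using (intervalIntegrable_logTwoSin (π / 2) (x + π / 2)).comp_add_right (π / 2)
  have hadd := integral_add (intervalIntegrable_logTwoSin 0 x) hint
  rw [hshift, integral_logTwoSin, lob_zero] at hadd
  rw [hsplit, lob_zero] at hscale
  linarith

lemma lob_pi : lob π = 0 := by
  have h := lob_two_mul (π / 2)
  rw [show 2 * (π / 2) = π by ring, show π / 2 + π / 2 = π by ring] at h
  linarith

lemma lob_pi_sub (x : ℝ) : lob (π - x) = -lob x := by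
  have h := integral_comp_sub_left logTwoSin (a := 0) (b := x) π
  simp only [logTwoSin_pi_sub, sub_zero, integral_logTwoSin, lob_zero, lob_pi] at h
  linarith

lemma lob_pi_div_two : lob (π / 2) = 0 := by
  have h := lob_pi_sub (π / 2)
  rw [show π - π / 2 = π / 2 by ring] at h
  linarith

lemma lob_periodic : Function.Periodic lob π := by
  intro x
  have h := logTwoSin_periodic.intervalIntegral_add_eq x 0
  rw [zero_add, integral_logTwoSin, integral_logTwoSin, lob_zero, lob_pi] at h
  linarith

lemma two_mul_lob_pi_div_six : 2 * lob (π / 6) = 3 * lob (π / 3) := by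
  have h := lob_two_mul (π / 3)
  rw [show 2 * (π / 3) = π - π / 3 by ring, lob_pi_sub,
    show π / 3 + π / 2 = π - π / 6 by ring, lob_pi_sub, lob_pi_div_two] at h
  linarith

lemma lob_le_lob_of_logTwoSin_nonneg {a b : ℝ} (hab : a ≤ b)
    (h : ∀ t ∈ Icc a b, 0 ≤ logTwoSin t) : lob b ≤ lob a := by
  have := integral_nonneg (μ := volume) hab h
  rw [integral_logTwoSin] at this
  linarith

lemma lob_le_lob_of_logTwoSin_nonpos {a b : ℝ} (hab : a ≤ b)
    (h : ∀ t ∈ Icc a b, logTwoSin t ≤ 0) : lob a ≤ lob b := by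
  have := integral_nonneg (μ := volume) hab fun t ht ↦ neg_nonneg.2 (h t ht)
  rw [intervalIntegral.integral_neg, integral_logTwoSin] at this
  linarith

lemma logTwoSin_nonpos_of_le_pi_div_six {t : ℝ} (h0 : 0 ≤ t) (ht : t ≤ π / 6) :
    logTwoSin t ≤ 0 := by
  have hsin : sin t ≤ 1 / 2 := by
    rw [← sin_pi_div_six]
    exact sin_le_sin_of_le_of_le_pi_div_two (by linarith [pi_pos]) (by linarith [pi_pos]) ht
  have hsin0 : 0 ≤ sin t := sin_nonneg_of_nonneg_of_le_pi h0 (by linarith [pi_pos])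
  refine log_nonpos (abs_nonneg _) ?_
  rw [abs_of_nonneg (by positivity)]
  linarith

lemma logTwoSin_nonpos_of_five_pi_div_six_le {t : ℝ} (ht : 5 * π / 6 ≤ t) (hπ : t ≤ π) :
    logTwoSin t ≤ 0 := by
  rw [← logTwoSin_pi_sub]
  exact logTwoSin_nonpos_of_le_pi_div_six (by linarith) (by linarith)

lemma logTwoSin_nonneg {t : ℝ} (h1 : π / 6 ≤ t) (h2 : t ≤ 5 * π / 6) : 0 ≤ logTwoSin t := by
  have hsin : 1 / 2 ≤ sin t := by
    rw [← sin_pi_div_six]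
    rcases le_total t (π / 2) with h | h
    · exact sin_le_sin_of_le_of_le_pi_div_two (by linarith [pi_pos]) h h1
    · rw [← sin_pi_sub t]
      exact sin_le_sin_of_le_of_le_pi_div_two (by linarith [pi_pos]) (by linarith) (by linarith)
  refine log_nonneg ?_
  rw [abs_of_nonneg (by linarith)]
  linarith

lemma lob_pi_div_six_nonneg : 0 ≤ lob (π / 6) := by
  have := lob_le_lob_of_logTwoSin_nonpos (by positivity)
    fun t ht ↦ logTwoSin_nonpos_of_le_pi_div_six ht.1 ht.2
  rwa [lob_zero] at this

/-- `lob` increases on `[0, π/6]`, decreases on `[π/6, 5π/6]` and increases on `[5π/6, π]`. -/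
lemma lob_le_lob_pi_div_six_of_mem_Icc {x : ℝ} (h0 : 0 ≤ x) (hπ : x ≤ π) :
    lob x ≤ lob (π / 6) := by
  have := pi_pos
  rcases le_total x (π / 6) with h1 | h1
  · exact lob_le_lob_of_logTwoSin_nonpos h1
      fun t ht ↦ logTwoSin_nonpos_of_le_pi_div_six (h0.trans ht.1) ht.2
  rcases le_total x (5 * π / 6) with h2 | h2
  · exact lob_le_lob_of_logTwoSin_nonneg h1 fun t ht ↦ logTwoSin_nonneg ht.1 (ht.2.trans h2)
  · have := lob_le_lob_of_logTwoSin_nonpos hπ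
      fun t ht ↦ logTwoSin_nonpos_of_five_pi_div_six_le (h2.trans ht.1) ht.2
    linarith [lob_pi, lob_pi_div_six_nonneg]

lemma lob_le_lob_pi_div_six (x : ℝ) : lob x ≤ lob (π / 6) := by
  obtain ⟨y, hy, hxy⟩ := lob_periodic.exists_mem_Ico₀ pi_pos x
  rw [hxy]
  exact lob_le_lob_pi_div_six_of_mem_Icc hy.1 hy.2.le

lemma abs_lob_le (x : ℝ) : |lob x| ≤ lob (π / 6) := by
  refine abs_le.2 ⟨?_, lob_le_lob_pi_div_six x⟩
  have := lob_le_lob_pi_div_six (π - x)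
  rw [lob_pi_sub] at this
  linarith

lemma monotoneOn_logTwoSin (k : ℕ) : MonotoneOn logTwoSin (Ioc (k * π) (k * π + π / 2)) := by
  intro s hs t ht hst
  rw [← logTwoSin_periodic.sub_nat_mul_eq k, ← logTwoSin_periodic.sub_nat_mul_eq (x := t) k]
  have hsin : ∀ u ∈ Ioc (k * π) (k * π + π / 2), 0 < sin (u - k * π) := fun u hu ↦
    sin_pos_of_pos_of_lt_pi (by linarith [hu.1]) (by linarith [hu.2, pi_pos])
  have := hsin s hs
  refine log_le_log (by positivity) ?_
  rw [abs_of_pos (by positivity), abs_of_pos (by linarith [hsin t ht])]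
  gcongr 2 * ?_
  exact sin_le_sin_of_le_of_le_pi_div_two (by linarith [hs.1, pi_pos]) (by linarith [ht.2])
    (by linarith)

lemma antitoneOn_logTwoSin (k : ℕ) : AntitoneOn logTwoSin (Ico (k * π + π / 2) (k * π + π)) := by
  have hrefl : ∀ t, logTwoSin t = logTwoSin (π - (t - k * π)) := fun t ↦ by
    rw [logTwoSin_pi_sub, logTwoSin_periodic.sub_nat_mul_eq]
  intro s hs t ht hst
  rw [hrefl s, hrefl t]
  refine monotoneOn_logTwoSin 0 ?_ ?_ (by linarith) <;>
    constructor <;> push_cast <;> linarith [hs.1, hs.2, ht.1, ht.2]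

lemma mul_le_integral_of_monotoneOn {f : ℝ → ℝ} {x y : ℝ} (hxy : x ≤ y)
    (hf : MonotoneOn f (Icc x y)) : (y - x) * f x ≤ ∫ t in x..y, f t := by
  have := integral_mono_on (μ := volume) hxy intervalIntegrable_const
    (by rwa [uIcc_of_le hxy] : MonotoneOn f (uIcc x y)).intervalIntegrable
    fun t ht ↦ hf ⟨le_rfl, hxy⟩ ht ht.1
  simpa using this

lemma mul_le_integral_of_antitoneOn {f : ℝ → ℝ} {x y : ℝ} (hxy : x ≤ y)
    (hf : AntitoneOn f (Icc x y)) : (y - x) * f y ≤ ∫ t in x..y, f t := by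
  have := integral_mono_on (μ := volume) hxy intervalIntegrable_const
    (by rwa [uIcc_of_le hxy] : AntitoneOn f (uIcc x y)).intervalIntegrable
    fun t ht ↦ hf ht ⟨hxy, le_rfl⟩ ht.2
  simpa using this

/-- The cell `[2πn/r, 2π(n+1)/r]` lies in `(kπ, kπ + π/2]` for `k = 0` or `k = 1`. -/
def RisingCell (r n : ℕ) : Prop := ∃ k ≤ 1, k * r < 2 * n ∧ 4 * (n + 1) ≤ (2 * k + 1) * r

/-- The cell `[2πn/r, 2π(n+1)/r]` lies in `[kπ + π/2, kπ + π)` for `k = 0` or `k = 1`. -/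
def FallingCell (r n : ℕ) : Prop :=
  ∃ k ≤ 1, (2 * k + 1) * r ≤ 4 * n ∧ 2 * (n + 1) < (k + 1) * r

lemma not_risingCell_and_fallingCell (r n : ℕ) : ¬(RisingCell r n ∧ FallingCell r n) := by
  rintro ⟨⟨k, hk, h₁, h₂⟩, ⟨l, hl, h₃, h₄⟩⟩
  interval_cases k <;> interval_cases l <;> omega

lemma two_pi_mul_succ_div_sub (r n : ℕ) :
    2 * π * (n + 1 : ℕ) / r - 2 * π * n / r = 2 * π / r := by
  push_cast
  ring

lemma mul_logTwoSin_le_integral_of_risingCell {r n : ℕ} (hr : 0 < r) (h : RisingCell r n) :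
    2 * π / r * logTwoSin (2 * π * n / r) ≤
      ∫ t in 2 * π * n / r..2 * π * (n + 1 : ℕ) / r, logTwoSin t := by
  obtain ⟨k, -, h₁, h₂⟩ := h
  have hr' : (0 : ℝ) < r := by exact_mod_cast hr
  have h₁' : (k : ℝ) * r < 2 * n := by exact_mod_cast h₁
  have h₂' : 4 * ((n : ℝ) + 1) ≤ (2 * k + 1) * r := by exact_mod_cast h₂
  have hle : 2 * π * n / r ≤ 2 * π * (n + 1 : ℕ) / r := by gcongr; omega
  rw [← two_pi_mul_succ_div_sub r n]
  refine mul_le_integral_of_monotoneOn hle ((monotoneOn_logTwoSin k).mono fun t ht ↦ ⟨?_, ?_⟩)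
  · refine lt_of_lt_of_le ?_ ht.1
    rw [lt_div_iff₀ hr']
    nlinarith [pi_pos]
  · refine ht.2.trans ?_
    rw [div_le_iff₀ hr']
    push_cast
    nlinarith [pi_pos]

lemma mul_logTwoSin_le_integral_of_fallingCell {r n : ℕ} (hr : 0 < r) (h : FallingCell r n) :
    2 * π / r * logTwoSin (2 * π * (n + 1 : ℕ) / r) ≤
      ∫ t in 2 * π * n / r..2 * π * (n + 1 : ℕ) / r, logTwoSin t := by
  obtain ⟨k, -, h₁, h₂⟩ := h
  have hr' : (0 : ℝ) < r := by exact_mod_cast hr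
  have h₁' : (2 * k + 1) * (r : ℝ) ≤ 4 * n := by exact_mod_cast h₁
  have h₂' : 2 * ((n : ℝ) + 1) < (k + 1) * r := by exact_mod_cast h₂
  have hle : 2 * π * n / r ≤ 2 * π * (n + 1 : ℕ) / r := by gcongr; omega
  rw [← two_pi_mul_succ_div_sub r n]
  refine mul_le_integral_of_antitoneOn hle ((antitoneOn_logTwoSin k).mono fun t ht ↦ ⟨?_, ?_⟩)
  · refine le_trans ?_ ht.1
    rw [le_div_iff₀ hr']
    nlinarith [pi_pos]
  · refine lt_of_le_of_lt ht.2 ?_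
    rw [div_lt_iff₀ hr']
    push_cast
    nlinarith [pi_pos]

instance (r : ℕ) : DecidablePred (RisingCell r) := fun _ ↦ by unfold RisingCell; infer_instance

instance (r : ℕ) : DecidablePred (FallingCell r) := fun _ ↦ by unfold FallingCell; infer_instance

/-- The cell whose integral dominates `logTwoSin` at the grid point `2πn/r`. -/
def cellOf (r n : ℕ) : ℕ := if RisingCell r n then n else n - 1

def goodPoints (r a c : ℕ) : Finset ℕ :=
  (Finset.Ioo a c).filter fun n ↦ RisingCell r n ∨ FallingCell r (n - 1)

lemma mem_goodPoints {r a c n : ℕ} :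
    n ∈ goodPoints r a c ↔ (a < n ∧ n < c) ∧ (RisingCell r n ∨ FallingCell r (n - 1)) := by
  rw [goodPoints, Finset.mem_filter, Finset.mem_Ioo]

lemma goodPoints_subset_Ioo (r a c : ℕ) : goodPoints r a c ⊆ Finset.Ioo a c :=
  Finset.filter_subset _ _

lemma mul_logTwoSin_le_integral_cellOf {r a c n : ℕ} (hr : 0 < r) (hn : n ∈ goodPoints r a c) :
    2 * π / r * logTwoSin (2 * π * n / r) ≤
      ∫ t in 2 * π * (cellOf r n : ℕ) / r..2 * π * (cellOf r n + 1 : ℕ) / r, logTwoSin t := by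
  obtain ⟨⟨han, -⟩, hgood⟩ := mem_goodPoints.1 hn
  by_cases hrise : RisingCell r n
  · rw [cellOf, if_pos hrise]
    exact mul_logTwoSin_le_integral_of_risingCell hr hrise
  · rw [cellOf, if_neg hrise]
    have := mul_logTwoSin_le_integral_of_fallingCell hr (hgood.resolve_left hrise)
    rwa [Nat.sub_add_cancel (by omega)] at this ⊢

lemma cellOf_injOn_goodPoints (r a c : ℕ) : Set.InjOn (cellOf r) (goodPoints r a c) := by
  intro x hx y hy hxy
  obtain ⟨⟨hax, -⟩, hgx⟩ := mem_goodPoints.1 hx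
  obtain ⟨⟨hay, -⟩, hgy⟩ := mem_goodPoints.1 hy
  by_cases hrx : RisingCell r x <;> by_cases hry : RisingCell r y <;>
    simp only [cellOf, hrx, hry, if_true, if_false] at hxy
  · exact hxy
  · rw [hxy] at hrx
    exact absurd ⟨hrx, hgy.resolve_left hry⟩ (not_risingCell_and_fallingCell r _)
  · rw [← hxy] at hry
    exact absurd ⟨hry, hgx.resolve_left hrx⟩ (not_risingCell_and_fallingCell r _)
  · omega

lemma image_cellOf_goodPoints_subset (r a c : ℕ) :
    (goodPoints r a c).image (cellOf r) ⊆ Finset.Ico a c := by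
  intro x hx
  obtain ⟨n, hn, rfl⟩ := Finset.mem_image.1 hx
  obtain ⟨⟨han, hnc⟩, -⟩ := mem_goodPoints.1 hn
  rw [Finset.mem_Ico, cellOf]
  split_ifs <;> omega

/-- The exceptional points are the two neighbours of each of `r/4` and `3r/4`, i.e. of the
peaks `π/2` and `3π/2`. -/
lemma card_Ioo_sdiff_goodPoints_le {r a c : ℕ} (hr : Odd r) (hc : c < r) :
    (Finset.Ioo a c \ goodPoints r a c).card ≤ 4 := by
  refine (Finset.card_le_card fun n hn ↦ ?_).trans
    (Finset.card_le_four (a := (r + 3) / 4 - 1) (b := (r + 3) / 4) (c := (3 * r + 3) / 4 - 1)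
      (d := (3 * r + 3) / 4))
  simp only [Finset.mem_sdiff, Finset.mem_Ioo, mem_goodPoints, RisingCell, FallingCell,
    not_and, not_or, not_exists] at hn
  obtain ⟨⟨han, hnc⟩, hbad⟩ := hn
  obtain ⟨hrise, hfall⟩ := hbad ⟨han, hnc⟩
  have h0 := hrise 0
  have h1 := hrise 1
  have h2 := hfall 0
  have h3 := hfall 1
  obtain ⟨m, rfl⟩ := hr
  simp only [Finset.mem_insert, Finset.mem_singleton]
  omega

lemma card_Ico_sdiff_image_cellOf_le {r a c : ℕ} (hr : Odd r) (hc : c < r) :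
    (Finset.Ico a c \ (goodPoints r a c).image (cellOf r)).card ≤ 5 := by
  have hbad := card_Ioo_sdiff_goodPoints_le (a := a) hr hc
  have hgood := goodPoints_subset_Ioo r a c
  rw [Finset.card_sdiff_of_subset hgood, Nat.card_Ioo] at hbad
  rw [Finset.card_sdiff_of_subset (image_cellOf_goodPoints_subset r a c),
    Finset.card_image_of_injOn (cellOf_injOn_goodPoints r a c), Nat.card_Ico]
  have := Finset.card_le_card hgood
  rw [Nat.card_Ioo] at this
  omega

/-- Each good point is charged to its cell; the at most four other points cost `log 2` each and
the at most five uncharged cells cost `η` each. -/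
theorem mul_sum_logTwoSin_le {r a c : ℕ} (hr : Odd r) (hac : a ≤ c) (hc : c < r) {η : ℝ}
    (hη : 0 ≤ η)
    (hcell : ∀ n < r, lob (2 * π * (n + 1 : ℕ) / r) - lob (2 * π * n / r) ≤ η) :
    2 * π / r * ∑ n ∈ Finset.Ioo a c, logTwoSin (2 * π * n / r) ≤
      lob (2 * π * a / r) - lob (2 * π * c / r) + 5 * η + 4 * (2 * π / r) * log 2 := by
  set I : ℕ → ℝ := fun n ↦ ∫ t in 2 * π * n / r..2 * π * (n + 1 : ℕ) / r, logTwoSin t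
  set G := goodPoints r a c
  set cells := G.image (cellOf r)
  have hcells := image_cellOf_goodPoints_subset r a c
  have hG : 2 * π / r * ∑ n ∈ G, logTwoSin (2 * π * n / r) ≤ ∑ m ∈ cells, I m := by
    rw [Finset.sum_image (cellOf_injOn_goodPoints r a c), Finset.mul_sum]
    exact Finset.sum_le_sum fun n hn ↦ mul_logTwoSin_le_integral_cellOf hr.pos hn
  have hbad : 2 * π / r * ∑ n ∈ Finset.Ioo a c \ G, logTwoSin (2 * π * n / r) ≤
      4 * (2 * π / r) * log 2 := by
    have hsum := Finset.sum_le_card_nsmul (Finset.Ioo a c \ G) _ _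
      fun n _ ↦ logTwoSin_le_log_two (2 * π * n / r)
    rw [nsmul_eq_mul] at hsum
    calc _ ≤ 2 * π / r * ((Finset.Ioo a c \ G).card * log 2) := by gcongr
      _ ≤ 2 * π / r * (4 * log 2) := by
        gcongr
        exact_mod_cast card_Ioo_sdiff_goodPoints_le hr hc
      _ = 4 * (2 * π / r) * log 2 := by ring
  have hmissed : -∑ m ∈ Finset.Ico a c \ cells, I m ≤ 5 * η := by
    have hsum := Finset.sum_le_card_nsmul (Finset.Ico a c \ cells) (fun m ↦ -I m) η
      fun m hm ↦ by
        simp only [I, integral_logTwoSin]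
        linarith [hcell m (by simp only [Finset.mem_sdiff, Finset.mem_Ico] at hm; omega)]
    rw [Finset.sum_neg_distrib, nsmul_eq_mul] at hsum
    calc _ ≤ _ := hsum
      _ ≤ 5 * η := by gcongr; exact_mod_cast card_Ico_sdiff_image_cellOf_le hr hc
  have htotal : ∑ m ∈ Finset.Ico a c, I m = lob (2 * π * a / r) - lob (2 * π * c / r) := by
    rw [sum_integral_adjacent_intervals_Ico hac fun _ _ ↦ intervalIntegrable_logTwoSin _ _,
      integral_logTwoSin]
  rw [← Finset.sum_sdiff (goodPoints_subset_Ioo r a c), mul_add]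
  linarith [Finset.sum_sdiff hcells (f := I)]

lemma sum_logTwoSin_sub_eq {r i j : ℕ} (hji : j < i) :
    ∑ k ∈ Finset.Icc 1 j, logTwoSin (2 * π * ((i : ℝ) - (k : ℝ)) / r) =
      ∑ n ∈ Finset.Ioo (i - j - 1) i, logTwoSin (2 * π * n / r) := by
  refine Finset.sum_nbij' (fun k ↦ i - k) (fun n ↦ i - n) ?_ ?_ ?_ ?_ fun k hk ↦ ?_
  any_goals intro k hk; simp only [Finset.mem_Icc, Finset.mem_Ioo] at hk ⊢; omega
  rw [Finset.mem_Icc] at hk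
  rw [Nat.cast_sub (by omega)]

lemma sum_logTwoSin_add_eq (r i j : ℕ) :
    ∑ k ∈ Finset.Icc 1 j, logTwoSin (2 * π * ((i : ℝ) + (k : ℝ)) / r) =
      ∑ n ∈ Finset.Ioo i (i + j + 1), logTwoSin (2 * π * n / r) := by
  refine Finset.sum_nbij' (fun k ↦ i + k) (fun n ↦ n - i) ?_ ?_ ?_ ?_ fun k _ ↦ ?_
  any_goals intro k hk; simp only [Finset.mem_Icc, Finset.mem_Ioo] at hk ⊢; omega
  push_cast
  rfl

lemma sum_logTwoSin_sub_add_le {r i j : ℕ} (hr : Odd r) (hji : j < i) (hi : 2 * i < r) {η : ℝ}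
    (hη : 0 ≤ η) (hcell : ∀ n < r, lob (2 * π * (n + 1 : ℕ) / r) - lob (2 * π * n / r) ≤ η) :
    ∑ k ∈ Finset.Icc 1 j, (logTwoSin (2 * π * ((i : ℝ) - (k : ℝ)) / r) +
      logTwoSin (2 * π * ((i : ℝ) + (k : ℝ)) / r)) ≤
        r / (2 * π) * (3 * lob (π / 3) + 10 * η) + 8 * log 2 := by
  have hr0 : (0 : ℝ) < r := by exact_mod_cast hr.pos
  have hlow := mul_sum_logTwoSin_le hr (a := i - j - 1) (c := i) (by omega) (by omega) hη hcell
  have hhigh := mul_sum_logTwoSin_le hr (a := i) (c := i + j + 1) (by omega) (by omega) hη hcell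
  have hends := abs_le.1 (abs_lob_le (2 * π * (i - j - 1 : ℕ) / r))
  have hends' := abs_le.1 (abs_lob_le (2 * π * (i + j + 1 : ℕ) / r))
  rw [Finset.sum_add_distrib, sum_logTwoSin_sub_eq hji, sum_logTwoSin_add_eq]
  refine le_of_mul_le_mul_left ?_ (by positivity : 0 < 2 * π / r)
  have hscale : 2 * π / r * (r / (2 * π) * (3 * lob (π / 3) + 10 * η) + 8 * log 2) =
      3 * lob (π / 3) + 10 * η + 8 * (2 * π / r) * log 2 := by
    field_simp
  rw [hscale, mul_add]
  -- the two bounds telescope at `2πi/r`; the outer endpoints are controlled by `abs_lob_le`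
  linarith [two_mul_lob_pi_div_six]

lemma abs_prod_fig8J_le {r i j : ℕ} (hr : Odd r) (hji : j < i) (hi : 2 * i < r) {η : ℝ}
    (hη : 0 ≤ η) (hcell : ∀ n < r, lob (2 * π * (n + 1 : ℕ) / r) - lob (2 * π * n / r) ≤ η) :
    |∏ k ∈ Finset.Icc 1 j,
        (-4 * sin (2 * π * ((i : ℝ) - (k : ℝ)) / r) * sin (2 * π * ((i : ℝ) + (k : ℝ)) / r))| ≤
      256 * exp (r / (2 * π) * (3 * lob (π / 3) + 10 * η)) := by
  calc _ = ∏ k ∈ Finset.Icc 1 j, (|2 * sin (2 * π * ((i : ℝ) - (k : ℝ)) / r)| *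
        |2 * sin (2 * π * ((i : ℝ) + (k : ℝ)) / r)|) := by
        rw [Finset.abs_prod]
        refine Finset.prod_congr rfl fun k _ ↦ ?_
        rw [← abs_mul, ← abs_neg]
        ring_nf
    _ ≤ ∏ k ∈ Finset.Icc 1 j, (exp (logTwoSin (2 * π * ((i : ℝ) - (k : ℝ)) / r)) *
        exp (logTwoSin (2 * π * ((i : ℝ) + (k : ℝ)) / r))) := by
        gcongr with k <;> exact abs_two_mul_sin_le_exp_logTwoSin _
    _ = exp (∑ k ∈ Finset.Icc 1 j, (logTwoSin (2 * π * ((i : ℝ) - (k : ℝ)) / r) +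
        logTwoSin (2 * π * ((i : ℝ) + (k : ℝ)) / r))) := by
        rw [exp_sum]
        simp only [exp_add]
    _ ≤ exp (r / (2 * π) * (3 * lob (π / 3) + 10 * η) + 8 * log 2) :=
        exp_le_exp.2 (sum_logTwoSin_sub_add_le hr hji hi hη hcell)
    _ = 256 * exp (r / (2 * π) * (3 * lob (π / 3) + 10 * η)) := by
        rw [exp_add, show (8 : ℝ) * log 2 = log 256 by
          rw [show (256 : ℝ) = 2 ^ 8 by norm_num, log_pow]; norm_num, exp_log (by norm_num)]
        ring

theorem abs_fig8J_le {r i : ℕ} (hr : Odd r) (hi : 2 * i < r) {η : ℝ} (hη : 0 ≤ η)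
    (hcell : ∀ n < r, lob (2 * π * (n + 1 : ℕ) / r) - lob (2 * π * n / r) ≤ η) :
    |fig8J r i| ≤ (1 + 256 * r) * exp (r / (2 * π) * (3 * lob (π / 3) + 10 * η)) := by
  set E := exp (r / (2 * π) * (3 * lob (π / 3) + 10 * η))
  have hE : 1 ≤ E := one_le_exp <| mul_nonneg (by positivity)
    (by linarith [lob_pi_div_six_nonneg, two_mul_lob_pi_div_six])
  have hi' : ((i - 1 : ℕ) : ℝ) ≤ r := by exact_mod_cast (by omega : i - 1 ≤ r)
  calc |fig8J r i|
      ≤ 1 + ∑ j ∈ Finset.Icc 1 (i - 1), |∏ k ∈ Finset.Icc 1 j,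
        (-4 * sin (2 * π * ((i : ℝ) - (k : ℝ)) / r) * sin (2 * π * ((i : ℝ) + (k : ℝ)) / r))| :=
        (abs_add_le _ _).trans (by rw [abs_one]; gcongr; exact Finset.abs_sum_le_sum_abs _ _)
    _ ≤ 1 + ∑ j ∈ Finset.Icc 1 (i - 1), 256 * E := by
        gcongr with j hj
        exact abs_prod_fig8J_le hr (by simp only [Finset.mem_Icc] at hj; omega) hi hη hcell
    _ = 1 + (i - 1 : ℕ) * (256 * E) := by simp
    _ ≤ (1 + 256 * r) * E := by nlinarith

lemma eventually_lob_succ_sub_le {η : ℝ} (hη : 0 < η) :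
    ∀ᶠ r : ℕ in Filter.atTop,
      ∀ n < r, lob (2 * π * (n + 1 : ℕ) / r) - lob (2 * π * n / r) ≤ η := by
  obtain ⟨δ, hδ, hlob⟩ := Metric.uniformContinuousOn_iff.1
    ((isCompact_Icc (a := 0) (b := 2 * π)).uniformContinuousOn_of_continuous
      continuous_lob.continuousOn) η hη
  filter_upwards [(tendsto_const_div_atTop_nhds_zero_nat (2 * π)).eventually (gt_mem_nhds hδ)]
    with r hr n hn
  have hr0 : (0 : ℝ) < r := by exact_mod_cast (by omega : 0 < r)
  have hmem : ∀ k ≤ r, 2 * π * k / r ∈ Icc 0 (2 * π) := fun k hk ↦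
    ⟨by positivity, by
      rw [div_le_iff₀ hr0]
      exact mul_le_mul_of_nonneg_left (by exact_mod_cast hk) (by positivity)⟩
  have := hlob _ (hmem (n + 1) hn) _ (hmem n hn.le) (by
    rwa [Real.dist_eq, two_pi_mul_succ_div_sub, abs_of_pos (by positivity)])
  exact (le_abs_self _).trans (Real.dist_eq _ _ ▸ this.le)

lemma eventually_one_add_mul_le_exp_mul (a : ℝ) {b : ℝ} (hb : 0 < b) :
    ∀ᶠ x : ℝ in Filter.atTop, 1 + a * x ≤ exp (b * x) := by
  filter_upwards [Filter.eventually_ge_atTop 0, Filter.eventually_ge_atTop (2 * a / b ^ 2)]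
    with x hx0 hxa
  have hax : a ≤ b ^ 2 * x / 2 := by
    rw [div_le_iff₀ (by positivity)] at hxa
    linarith
  have hbx : 0 ≤ b * x := by positivity
  nlinarith [quadratic_le_exp_of_nonneg hbx]

/-- Uniform exponential upper bound on the values of the colored Jones polynomials of
the figure-eight knot: for every `ε > 0`, for all sufficiently large odd `r = 2m+1` and
every `1 ≤ i ≤ m`, `|J_i(r)| ≤ exp(r(3Λ(π/3)/(2π) + ε))`. -/
theorem stmt10 :
    ∀ ε : ℝ, 0 < ε → ∃ R : ℕ, ∀ m : ℕ, R ≤ 2*m+1 → ∀ i : ℕ, 1 ≤ i → i ≤ m →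
      |fig8J (2*m+1) i| ≤ Real.exp ((2*(m:ℝ)+1) * (3 * lob (π/3) / (2*π) + ε)) := by
  intro ε hε
  obtain ⟨R, hR⟩ := Filter.eventually_atTop.1
    ((eventually_lob_succ_sub_le (η := π * ε / 10) (by positivity)).and
      (tendsto_natCast_atTop_atTop.eventually
        (eventually_one_add_mul_le_exp_mul 256 (half_pos hε))))
  refine ⟨R, fun m hm i _ him ↦ ?_⟩
  obtain ⟨hcell, hexp⟩ := hR _ hm
  calc |fig8J (2 * m + 1) i|
      ≤ (1 + 256 * (2 * m + 1 : ℕ)) *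
          exp ((2 * m + 1 : ℕ) / (2 * π) * (3 * lob (π / 3) + 10 * (π * ε / 10))) :=
        abs_fig8J_le (odd_two_mul_add_one m) (by omega) (by positivity) hcell
    _ ≤ exp (ε / 2 * (2 * m + 1 : ℕ)) *
          exp ((2 * m + 1 : ℕ) / (2 * π) * (3 * lob (π / 3) + 10 * (π * ε / 10))) := by
        gcongr
    _ = exp ((2 * m + 1) * (3 * lob (π / 3) / (2 * π) + ε)) := by
        rw [← exp_add]
        congr 1
        push_cast
        field_simp
        ring
end

section
/- Let r ≥ 3 be an odd integer and A ∈ ℂ a primitive 2r-th root of unity. If (i,j,k,l,m,n) ∈ I_r⁶ is an admissible 6-tuple, then (i,j,k,l′,m′,n′) is also an admissible 6-tuple, and the quantum 6j-symbols agree: |i j k; l′ m′ n′| = |i j k; l m n|. -/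
/-- The quantum integer `[n] = (A^{2n} − A^{−2n})/(A² − A^{−2})`. -/
noncomputable def qint (A : ℂ) (n : ℤ) : ℂ :=
  (A^(2*n) - A^(-(2*n))) / (A^(2:ℤ) - A^(-2:ℤ))

/-- The quantum factorial `[n]! = ∏_{k=1}^{n} [k]`, with `[0]! = 1`. -/
noncomputable def qfact (A : ℂ) (n : ℕ) : ℂ := ∏ k ∈ Finset.Icc 1 n, qint A k

/-- A triple `(i,j,k) ∈ I_r³` is admissible if `i+j ≥ k`, `j+k ≥ i`, `k+i ≥ j`,
`i+j+k` is even and `i+j+k ≤ 2(r−2)`. -/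
def triAdm (r i j k : ℕ) : Prop :=
  k ≤ i + j ∧ i ≤ j + k ∧ j ≤ k + i ∧ Even (i + j + k) ∧ i + j + k ≤ 2*(r-2)

/-- A 6-tuple `(i,j,k,l,m,n) ∈ I_r⁶` is admissible if the triples `(i,j,k)`, `(j,l,n)`,
`(i,m,n)`, `(k,l,m)` are admissible. -/
def sixAdm (r i j k l m n : ℕ) : Prop :=
  triAdm r i j k ∧ triAdm r j l n ∧ triAdm r i m n ∧ triAdm r k l m

/-- The quantum 6j-symbol
`|i j k; l m n| = Σ_{z=max T_a}^{min Q_b} (−1)^z [z+1]! / (∏_a [z−T_a]! ∏_b [Q_b−z]!)`,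
where `T₁=(i+j+k)/2, T₂=(i+m+n)/2, T₃=(j+l+n)/2, T₄=(k+l+m)/2`,
`Q₁=(i+j+l+m)/2, Q₂=(i+k+l+n)/2, Q₃=(j+k+m+n)/2`. -/
noncomputable def sixj (A : ℂ) (i j k l m n : ℕ) : ℂ :=
  ∑ z ∈ Finset.Icc
      (max (max ((i+j+k)/2) ((i+m+n)/2)) (max ((j+l+n)/2) ((k+l+m)/2)))
      (min (min ((i+j+l+m)/2) ((i+k+l+n)/2)) ((j+k+m+n)/2)),
    (-1:ℂ)^z * qfact A (z+1) /
      (qfact A (z - (i+j+k)/2) * qfact A (z - (i+m+n)/2) *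
        qfact A (z - (j+l+n)/2) * qfact A (z - (k+l+m)/2) *
        qfact A ((i+j+l+m)/2 - z) * qfact A ((i+k+l+n)/2 - z) *
        qfact A ((j+k+m+n)/2 - z))


/-!
Complementing `l, m, n` fixes `T₁` and turns `T₂, T₃, T₄, Q₁, Q₂, Q₃` into
`(r-2)+i-T₂, (r-2)+j-T₃, (r-2)+k-T₄, (r-2)+i+j-Q₁, (r-2)+i+k-Q₂, (r-2)+j+k-Q₃`.
Under the substitution `z ↦ (r-2)+T₁-z` the six factorials `[z-T₂]!, …, [Q₃-z]!` of one sum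
become those of the other, and the remaining factor `(-1)^z [z+1]!/[z-T₁]!` is invariant because
`[r-k] = -[k]` gives `[a]! [r-1-a]! = (-1)^a [r-1]!` and `r-2` is odd. Summands with `z > r-2`
vanish since `[r] = 0`, so after this truncation the substitution matches the two ranges exactly.
-/

open Finset

theorem sum_eq_sum_of_tsub_involution {M : Type*} [AddCommMonoid M] {s t : Finset ℕ}
    {f g : ℕ → M} {p c : ℕ} (hpc : p ≤ c)
    (hf : ∀ z, p < z → f z = 0) (hg : ∀ w, p < w → g w = 0)
    (hst : ∀ z ∈ s, z ≤ p → c - z ∈ t ∧ c - z ≤ p)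
    (hts : ∀ w ∈ t, w ≤ p → c - w ∈ s ∧ c - w ≤ p)
    (hfg : ∀ z ∈ s, z ≤ p → g (c - z) = f z) :
    ∑ w ∈ t, g w = ∑ z ∈ s, f z := by
  rw [← sum_filter_of_ne (p := (· ≤ p)) fun w _ hw => not_lt.1 (mt (hg w) hw),
    ← sum_filter_of_ne (p := (· ≤ p)) fun z _ hz => not_lt.1 (mt (hf z) hz)]
  refine sum_nbij' (c - ·) (c - ·) ?_ ?_ ?_ ?_ ?_ <;> simp only [mem_filter]
  · exact fun w hw => hts w hw.1 hw.2
  · exact fun z hz => hst z hz.1 hz.2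
  · intro w hw; omega
  · intro z hz; omega
  · intro w hw
    have := hfg (c - w) (hts w hw.1 hw.2).1 (hts w hw.1 hw.2).2
    rwa [Nat.sub_sub_self (by omega)] at this

noncomputable def racahTerm (A : ℂ) (t₁ t₂ t₃ t₄ q₁ q₂ q₃ z : ℕ) : ℂ :=
  (-1) ^ z * qfact A (z + 1) /
    (qfact A (z - t₁) * qfact A (z - t₂) * qfact A (z - t₃) * qfact A (z - t₄) *
      qfact A (q₁ - z) * qfact A (q₂ - z) * qfact A (q₃ - z))

lemma sixj_eq_sum_racahTerm (A : ℂ) (i j k l m n : ℕ) :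
    sixj A i j k l m n = ∑ z ∈ Icc
      (max (max ((i+j+k)/2) ((i+m+n)/2)) (max ((j+l+n)/2) ((k+l+m)/2)))
      (min (min ((i+j+l+m)/2) ((i+k+l+n)/2)) ((j+k+m+n)/2)),
    racahTerm A ((i+j+k)/2) ((i+m+n)/2) ((j+l+n)/2) ((k+l+m)/2)
      ((i+j+l+m)/2) ((i+k+l+n)/2) ((j+k+m+n)/2) z := rfl

section

variable {r : ℕ} {A : ℂ}

lemma qint_sub_eq_neg (hA0 : A ≠ 0) (hA : A ^ (2 * r) = 1) (k : ℤ) :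
    qint A (r - k) = -qint A k := by
  have h2r : A ^ (2 * (r : ℤ)) = 1 := by exact_mod_cast hA
  rw [qint, qint, show 2 * ((r : ℤ) - k) = 2 * r + -(2 * k) by ring, neg_add, neg_neg,
    zpow_add₀ hA0, zpow_add₀ hA0, zpow_neg A (2 * (r : ℤ)), h2r]
  ring

lemma qint_self (hA0 : A ≠ 0) (hA : A ^ (2 * r) = 1) : qint A r = 0 := by
  simpa [qint] using qint_sub_eq_neg hA0 hA 0

lemma qfact_succ (n : ℕ) : qfact A (n + 1) = qfact A n * qint A (n + 1) := by
  rw [qfact, qfact, prod_Icc_succ_top (by omega), Nat.cast_add, Nat.cast_one]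

lemma qfact_eq_zero (hA0 : A ≠ 0) (hA : A ^ (2 * r) = 1) (hr : 0 < r) {a : ℕ} (ha : r ≤ a) :
    qfact A a = 0 :=
  prod_eq_zero (i := r) (mem_Icc.2 ⟨hr, ha⟩) (qint_self hA0 hA)

lemma qfact_mul_qfact_sub (hA0 : A ≠ 0) (hA : A ^ (2 * r) = 1) :
    ∀ a ≤ r - 1, qfact A a * qfact A (r - 1 - a) = (-1) ^ a * qfact A (r - 1)
  | 0, _ => by simp [qfact]
  | a + 1, ha => by
    have ih := qfact_mul_qfact_sub hA0 hA a (by omega)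
    have hrefl : qint A ((r - 2 - a : ℕ) + 1) = -qint A (a + 1) := by
      rw [show ((r - 2 - a : ℕ) : ℤ) + 1 = r - (a + 1) by omega, qint_sub_eq_neg hA0 hA]
    rw [show r - 1 - a = r - 2 - a + 1 by omega, qfact_succ, hrefl] at ih
    rw [show r - 1 - (a + 1) = r - 2 - a by omega, qfact_succ, pow_succ]
    linear_combination -ih

lemma zpow_sub_zpow_neg_ne_zero (hodd : Odd r) (hA : IsPrimitiveRoot A (2 * r)) {k : ℕ}
    (h0 : 0 < k) (hk : k < r) : A ^ (2 * (k : ℤ)) - A ^ (-(2 * (k : ℤ))) ≠ 0 := by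
  intro h
  have hA0 : A ≠ 0 := hA.ne_zero (by omega)
  have h4k : A ^ (4 * k) = 1 := by
    have : A ^ (4 * (k : ℤ)) = 1 := by
      rw [show 4 * (k : ℤ) = 2 * k + 2 * k by ring, zpow_add₀ hA0]
      nth_rewrite 2 [sub_eq_zero.1 h]
      rw [← zpow_add₀ hA0, add_neg_cancel, zpow_zero]
    exact_mod_cast this
  -- `2r ∣ 4k` forces `r ∣ k` because `r` is odd
  have hdvd : r ∣ k := by
    have : r ∣ k * 2 := by
      obtain ⟨c, hc⟩ := hA.pow_eq_one_iff_dvd _ |>.1 h4k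
      exact ⟨c, by linarith⟩
    exact (Nat.coprime_two_right.2 hodd).dvd_of_dvd_mul_right this
  exact absurd (Nat.le_of_dvd h0 hdvd) (by omega)

lemma qfact_ne_zero (hodd : Odd r) (hA : IsPrimitiveRoot A (2 * r)) {a : ℕ} (ha : a < r) :
    qfact A a ≠ 0 := by
  refine prod_ne_zero_iff.2 fun k hk => div_ne_zero ?_ ?_
  · exact zpow_sub_zpow_neg_ne_zero hodd hA (mem_Icc.1 hk).1 (by grind)
  · simpa using zpow_sub_zpow_neg_ne_zero hodd hA (k := 1) one_pos (by grind)

lemma qfact_div_reflect (hodd : Odd r) (hA : IsPrimitiveRoot A (2 * r)) {t z : ℕ}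
    (htz : t ≤ z) (hz : z + 2 ≤ r) :
    (-1) ^ (r - 2 + t - z) * qfact A (r - 2 + t - z + 1) / qfact A (r - 2 - z)
      = (-1) ^ z * qfact A (z + 1) / qfact A (z - t) := by
  have hA0 : A ≠ 0 := hA.ne_zero (by omega)
  rw [div_eq_div_iff (qfact_ne_zero hodd hA (by omega)) (qfact_ne_zero hodd hA (by omega))]
  have h₁ := qfact_mul_qfact_sub hA0 hA.pow_eq_one (z - t) (by omega)
  have h₂ := qfact_mul_qfact_sub hA0 hA.pow_eq_one (z + 1) (by omega)
  rw [show r - 1 - (z - t) = r - 2 + t - z + 1 by omega] at h₁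
  rw [show r - 1 - (z + 1) = r - 2 - z by omega] at h₂
  have hsign₁ : (-1 : ℂ) ^ (r - 2 + t - z) * (-1) ^ (z - t) = -1 := by
    obtain ⟨s, hs⟩ := hodd
    rw [← pow_add, Odd.neg_one_pow ⟨s - 1, by omega⟩]
  have hsign₂ : (-1 : ℂ) ^ z * (-1) ^ (z + 1) = -1 := by
    rw [← pow_add, Odd.neg_one_pow ⟨z, by ring⟩]
  linear_combination (-1) ^ (r - 2 + t - z) * h₁ - (-1) ^ z * h₂
    + qfact A (r - 1) * (hsign₁ - hsign₂)

lemma racahTerm_eq_zero (hA : IsPrimitiveRoot A (2 * r)) (hr : 0 < r)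
    {t₁ t₂ t₃ t₄ q₁ q₂ q₃ z : ℕ} (hz : r ≤ z + 1) :
    racahTerm A t₁ t₂ t₃ t₄ q₁ q₂ q₃ z = 0 := by
  rw [racahTerm, qfact_eq_zero (hA.ne_zero (by omega)) hA.pow_eq_one hr hz, mul_zero, zero_div]

lemma racahTerm_reflect (hodd : Odd r) (hA : IsPrimitiveRoot A (2 * r))
    {t₁ t₂ t₃ t₄ q₁ q₂ q₃ t₂' t₃' t₄' q₁' q₂' q₃' z : ℕ} (ht₁ : t₁ ≤ z) (hz : z + 2 ≤ r)
    (h₂ : r - 2 + t₁ - z - t₂' = q₃ - z) (h₃ : r - 2 + t₁ - z - t₃' = q₂ - z)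
    (h₄ : r - 2 + t₁ - z - t₄' = q₁ - z) (h₅ : q₁' - (r - 2 + t₁ - z) = z - t₄)
    (h₆ : q₂' - (r - 2 + t₁ - z) = z - t₃) (h₇ : q₃' - (r - 2 + t₁ - z) = z - t₂) :
    racahTerm A t₁ t₂' t₃' t₄' q₁' q₂' q₃' (r - 2 + t₁ - z) =
      racahTerm A t₁ t₂ t₃ t₄ q₁ q₂ q₃ z := by
  rw [racahTerm, racahTerm, h₂, h₃, h₄, h₅, h₆, h₇, show r - 2 + t₁ - z - t₁ = r - 2 - z by omega]
  linear_combination (qfact A (z - t₂) * qfact A (z - t₃) * qfact A (z - t₄) *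
    qfact A (q₁ - z) * qfact A (q₂ - z) * qfact A (q₃ - z))⁻¹ * qfact_div_reflect hodd hA ht₁ hz

lemma sum_racahTerm_reflect (hodd : Odd r) (hr : 2 ≤ r)
    (hA : IsPrimitiveRoot A (2 * r)) {i j k t₁ t₂ t₃ t₄ q₁ q₂ q₃ : ℕ}
    (ht₁ : 2 * t₁ = i + j + k) (hq₁ : q₁ + k = t₁ + t₄) (hq₂ : q₂ + j = t₁ + t₃)
    (hq₃ : q₃ + i = t₁ + t₂) (ht₂ : t₂ ≤ r - 2) (ht₃ : t₃ ≤ r - 2) (ht₄ : t₄ ≤ r - 2) :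
    ∑ z ∈ Icc (max (max t₁ (r - 2 + i - t₂)) (max (r - 2 + j - t₃) (r - 2 + k - t₄)))
        (min (min (r - 2 + (i + j) - q₁) (r - 2 + (i + k) - q₂)) (r - 2 + (j + k) - q₃)),
      racahTerm A t₁ (r - 2 + i - t₂) (r - 2 + j - t₃) (r - 2 + k - t₄)
        (r - 2 + (i + j) - q₁) (r - 2 + (i + k) - q₂) (r - 2 + (j + k) - q₃) z
      = ∑ z ∈ Icc (max (max t₁ t₂) (max t₃ t₄)) (min (min q₁ q₂) q₃),
          racahTerm A t₁ t₂ t₃ t₄ q₁ q₂ q₃ z := by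
  refine sum_eq_sum_of_tsub_involution (p := r - 2) (c := r - 2 + t₁) (Nat.le_add_right _ _)
    (fun z hz => racahTerm_eq_zero hA (by omega) (by omega))
    (fun z hz => racahTerm_eq_zero hA (by omega) (by omega)) ?_ ?_ ?_
  all_goals intro z hz hzp; simp only [mem_Icc, max_le_iff, le_min_iff] at hz ⊢
  · omega
  · omega
  · exact racahTerm_reflect hodd hA (by omega) (by omega) (by omega) (by omega) (by omega)
      (by omega) (by omega) (by omega)

end

lemma add_tsub_add_tsub_div_two {p a b c : ℕ} (hb : b ≤ p) (hc : c ≤ p)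
    (h : (a + b + c) % 2 = 0) : (a + (p - b) + (p - c)) / 2 = p + a - (a + b + c) / 2 := by
  omega

lemma triAdm_compl {r a b c : ℕ} (hb : b ≤ r - 2) (hc : c ≤ r - 2) (h : triAdm r a b c) :
    triAdm r a (r - 2 - b) (r - 2 - c) := by
  obtain ⟨h₁, h₂, h₃, h₄, h₅⟩ := h
  rw [Nat.even_iff] at h₄
  refine ⟨?_, ?_, ?_, Nat.even_iff.2 ?_, ?_⟩ <;> omega

lemma sixAdm_compl {r i j k l m n : ℕ} (hl : l ≤ r - 2) (hm : m ≤ r - 2) (hn : n ≤ r - 2)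
    (h : sixAdm r i j k l m n) : sixAdm r i j k (r - 2 - l) (r - 2 - m) (r - 2 - n) :=
  ⟨h.1, triAdm_compl hl hn h.2.1, triAdm_compl hm hn h.2.2.1, triAdm_compl hl hm h.2.2.2⟩

theorem stmt16_general (r : ℕ) (hodd : Odd r) (hr : 3 ≤ r) (A : ℂ)
    (hA : IsPrimitiveRoot A (2*r)) (i j k l m n : ℕ)
    (hl : l ≤ r - 2) (hm : m ≤ r - 2) (hn : n ≤ r - 2)
    (h : sixAdm r i j k l m n) :
    sixAdm r i j k (r-2-l) (r-2-m) (r-2-n) ∧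
      sixj A i j k (r-2-l) (r-2-m) (r-2-n) = sixj A i j k l m n := by
  refine ⟨sixAdm_compl hl hm hn h, ?_⟩
  obtain ⟨⟨-, -, -, e₁, b₁⟩, ⟨-, -, -, e₃, b₃⟩, ⟨-, -, -, e₂, b₂⟩, ⟨-, -, -, e₄, b₄⟩⟩ := h
  rw [Nat.even_iff] at e₁ e₂ e₃ e₄
  rw [sixj_eq_sum_racahTerm, sixj_eq_sum_racahTerm, add_tsub_add_tsub_div_two hm hn e₂,
    add_tsub_add_tsub_div_two hl hn e₃, add_tsub_add_tsub_div_two hl hm e₄,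
    add_tsub_add_tsub_div_two hl hm (by omega), add_tsub_add_tsub_div_two hl hn (by omega),
    add_tsub_add_tsub_div_two hm hn (by omega)]
  exact sum_racahTerm_reflect hodd (by omega) hA (by omega) (by omega) (by omega) (by omega)
    (by omega) (by omega) (by omega)

/-- For `r ≥ 3` odd and `A` a primitive `2r`-th root of unity: if
`(i,j,k,l,m,n) ∈ I_r⁶` is admissible then so is `(i,j,k,l′,m′,n′)`, where
`x′ = r−2−x`, and the quantum 6j-symbols agree. -/
theorem stmt16 (r : ℕ) (hodd : Odd r) (hr : 3 ≤ r) (A : ℂ)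
    (hA : IsPrimitiveRoot A (2*r)) (i j k l m n : ℕ)
    (hi : i ≤ r - 2) (hj : j ≤ r - 2) (hk : k ≤ r - 2)
    (hl : l ≤ r - 2) (hm : m ≤ r - 2) (hn : n ≤ r - 2)
    (h : sixAdm r i j k l m n) :
    sixAdm r i j k (r-2-l) (r-2-m) (r-2-n) ∧
      sixj A i j k (r-2-l) (r-2-m) (r-2-n) = sixj A i j k l m n :=
  stmt16_general r hodd hr A hA i j k l m n hl hm hn h
end
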